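/- For every integer n ≥ 1, the ratio Φ⁽ⁿ⁾(x)/Φ⁽ⁿ⁻¹⁾(x) of successive derivatives of Φ tends to 0 as x → -∞ and tends to +∞ as x → +∞. -/

import Mathlib

/-!
With `w_a(t) = exp(-t²) tᵃ` one has `F_a(x) = mgfIoi w_a (-2x)`, and differentiation under the
integral gives `F_a' = -2 F_{a+1}`. Hence `Φ⁽ⁿ⁾ = (2β/(√β σ̂))ⁿ · F_{a+n} ∘ u`, so the ratio of
successive derivatives is a positive constant times `F_{b+1}(u)/F_b(u)` with `b = a + n - 1`.
That quotient is the mean of `t` under the tilted density `e^{st} w_b(t)`, `s = -2u`. Since the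
tilt grows like `e^{st}`, the tilted mass concentrates at `t = 0` as `s → -∞` and escapes to
`t = ∞` as `s → ∞`, so the mean tends to `0`, respectively to `∞`; and `u → ∞` as `x → -∞`,
`u → -∞` as `x → ∞`.
-/

open MeasureTheory Real Filter

/-- `Fa a x = ∫₀^∞ exp(-t² - 2xt) · t^a dt`, a Hermite-type function of negative degree. -/
noncomputable def Fa (a x : ℝ) : ℝ :=
  ∫ t in Set.Ioi (0 : ℝ), Real.exp (-(t ^ 2) - 2 * x * t) * t ^ a

/-- `Phi β σh δ c x = F_a(u(x))` with `a = δ/β - 1` and `u(x) = (c - βx)/(√β·σ̂)`. -/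
noncomputable def Phi (β σh δ c : ℝ) (x : ℝ) : ℝ :=
  Fa (δ / β - 1) ((c - β * x) / (Real.sqrt β * σh))

open Set Topology

noncomputable def mgfIoi (w : ℝ → ℝ) (s : ℝ) : ℝ :=
  ∫ t in Ioi 0, exp (s * t) * w t

section mgfIoi

variable {w : ℝ → ℝ}

lemma integrableOn_exp_mul_mul_self
    (hw : ∀ s, IntegrableOn (fun t ↦ exp (s * t) * w t) (Ioi 0)) (s : ℝ) :
    IntegrableOn (fun t ↦ exp (s * t) * (t * w t)) (Ioi 0) := by
  refine (hw (s + 1)).norm.mono' ?_ ?_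
  · exact ((continuous_id.aestronglyMeasurable.mul (hw s).aestronglyMeasurable).congr
      (Eventually.of_forall fun t ↦ by simp only [Pi.mul_apply, id]; ring))
  · filter_upwards [ae_restrict_mem measurableSet_Ioi] with t (ht : 0 < t)
    have ht' : t ≤ exp t := by linarith [add_one_le_exp t]
    simp only [norm_mul, Real.norm_eq_abs, abs_exp, abs_of_pos ht, add_mul, one_mul, exp_add,
      mul_assoc]
    gcongr

lemma hasDerivAt_mgfIoi (hw : ∀ s, IntegrableOn (fun t ↦ exp (s * t) * w t) (Ioi 0)) (s : ℝ) :
    HasDerivAt (mgfIoi w) (mgfIoi (fun t ↦ t * w t) s) s := by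
  have hw' := integrableOn_exp_mul_mul_self hw
  refine (hasDerivAt_integral_of_dominated_loc_of_deriv_le (Metric.ball_mem_nhds s one_pos)
    (Eventually.of_forall fun r ↦ (hw r).aestronglyMeasurable) (hw s)
    (F' := fun r t ↦ exp (r * t) * (t * w t)) (hw' s).aestronglyMeasurable
    (bound := fun t ↦ ‖exp ((s + 1) * t) * (t * w t)‖) ?_ (hw' (s + 1)).norm ?_).2
  · filter_upwards [ae_restrict_mem measurableSet_Ioi] with t (ht : 0 < t) r hball
    have hr : r < s + 1 := by
      linarith [(abs_lt.1 (Metric.mem_ball.1 hball)).2, Real.dist_eq r s]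
    simp only [norm_mul, Real.norm_eq_abs, abs_exp]
    gcongr
  · refine Eventually.of_forall fun t r _ ↦ ?_
    simpa [mul_comm, mul_left_comm, mul_assoc] using
      ((hasDerivAt_mul_const t).exp).mul_const (w t)

lemma integrableOn_of_integrableOn_exp_mul
    (hw : ∀ s, IntegrableOn (fun t ↦ exp (s * t) * w t) (Ioi 0)) : IntegrableOn w (Ioi 0) := by
  simpa using hw 0

lemma mgfIoi_eq_add (hw : ∀ s, IntegrableOn (fun t ↦ exp (s * t) * w t) (Ioi 0)) (s : ℝ)
    {p : ℝ} (hp : 0 ≤ p) :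
    mgfIoi w s = (∫ t in Ioc 0 p, exp (s * t) * w t) + ∫ t in Ioi p, exp (s * t) * w t := by
  rw [mgfIoi, ← Ioc_union_Ioi_eq_Ioi hp]
  exact setIntegral_union (Ioc_disjoint_Ioi le_rfl) measurableSet_Ioi
    ((hw s).mono_set Ioc_subset_Ioi_self) ((hw s).mono_set (Ioi_subset_Ioi hp))

lemma setIntegral_le_mgfIoi (hw : ∀ s, IntegrableOn (fun t ↦ exp (s * t) * w t) (Ioi 0))
    (hw0 : ∀ t ∈ Ioi 0, 0 ≤ w t) (s : ℝ) {S : Set ℝ} (hS : S ⊆ Ioi 0) :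
    ∫ t in S, exp (s * t) * w t ≤ mgfIoi w s := by
  refine setIntegral_mono_set (hw s) ?_ hS.eventuallyLE
  filter_upwards [ae_restrict_mem measurableSet_Ioi] with t ht
  exact mul_nonneg (exp_pos _).le (hw0 t ht)

lemma setIntegral_exp_mul_pos (hw : ∀ s, IntegrableOn (fun t ↦ exp (s * t) * w t) (Ioi 0))
    (hpos : ∀ t ∈ Ioi 0, 0 < w t) (s : ℝ) {S : Set ℝ} (hS : S ⊆ Ioi 0)
    (hSm : MeasurableSet S) (hvol : 0 < volume S) : 0 < ∫ t in S, exp (s * t) * w t := by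
  refine (setIntegral_pos_iff_support_of_nonneg_ae ?_ ((hw s).mono_set hS)).2 ?_
  · filter_upwards [ae_restrict_mem hSm] with t ht
    exact mul_nonneg (exp_pos _).le (hpos t (hS ht)).le
  · exact hvol.trans_le
      (measure_mono fun t ht ↦ ⟨(mul_pos (exp_pos _) (hpos t (hS ht))).ne', ht⟩)

lemma mgfIoi_pos (hw : ∀ s, IntegrableOn (fun t ↦ exp (s * t) * w t) (Ioi 0))
    (hpos : ∀ t ∈ Ioi 0, 0 < w t) (s : ℝ) : 0 < mgfIoi w s :=
  setIntegral_exp_mul_pos hw hpos s subset_rfl measurableSet_Ioi (by simp)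

lemma setIntegral_exp_mul_le (hw : ∀ s, IntegrableOn (fun t ↦ exp (s * t) * w t) (Ioi 0))
    (hw0 : ∀ t ∈ Ioi 0, 0 ≤ w t) {S : Set ℝ} (hS : S ⊆ Ioi 0) (hSm : MeasurableSet S)
    {s r : ℝ} (h : ∀ t ∈ S, s * t ≤ r) :
    ∫ t in S, exp (s * t) * w t ≤ exp r * ∫ t in S, w t := by
  rw [← integral_const_mul]
  exact setIntegral_mono_on ((hw s).mono_set hS)
    (((integrableOn_of_integrableOn_exp_mul hw).mono_set hS).const_mul _) hSm
    fun t ht ↦ mul_le_mul_of_nonneg_right (exp_le_exp.2 (h t ht)) (hw0 t (hS ht))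

lemma exp_mul_le_setIntegral (hw : ∀ s, IntegrableOn (fun t ↦ exp (s * t) * w t) (Ioi 0))
    (hw0 : ∀ t ∈ Ioi 0, 0 ≤ w t) {S : Set ℝ} (hS : S ⊆ Ioi 0) (hSm : MeasurableSet S)
    {s r : ℝ} (h : ∀ t ∈ S, r ≤ s * t) :
    exp r * ∫ t in S, w t ≤ ∫ t in S, exp (s * t) * w t := by
  rw [← integral_const_mul]
  exact setIntegral_mono_on (((integrableOn_of_integrableOn_exp_mul hw).mono_set hS).const_mul _)
    ((hw s).mono_set hS) hSm
    fun t ht ↦ mul_le_mul_of_nonneg_right (exp_le_exp.2 (h t ht)) (hw0 t (hS ht))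

lemma mgfIoi_mul_self_le_of_nonpos
    (hw : ∀ s, IntegrableOn (fun t ↦ exp (s * t) * w t) (Ioi 0))
    (hw0 : ∀ t ∈ Ioi 0, 0 ≤ w t) {p s : ℝ} (hp : 0 ≤ p) (hs : s ≤ 0) :
    mgfIoi (fun t ↦ t * w t) s ≤ p * mgfIoi w s + exp (s * p) * ∫ t in Ioi p, t * w t := by
  have hw' := integrableOn_exp_mul_mul_self hw
  have hw0' t (ht : t ∈ Ioi (0 : ℝ)) : 0 ≤ t * w t := mul_nonneg (le_of_lt ht) (hw0 t ht)
  have hnear : ∫ t in Ioc 0 p, exp (s * t) * (t * w t) ≤ p * mgfIoi w s := calc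
    _ ≤ ∫ t in Ioc 0 p, p * (exp (s * t) * w t) :=
        setIntegral_mono_on ((hw' s).mono_set Ioc_subset_Ioi_self)
          (((hw s).mono_set Ioc_subset_Ioi_self).const_mul p) measurableSet_Ioc fun t ht ↦ by
          rw [mul_left_comm]
          exact mul_le_mul_of_nonneg_right ht.2 (mul_nonneg (exp_pos _).le (hw0 t ht.1))
    _ = p * ∫ t in Ioc 0 p, exp (s * t) * w t := integral_const_mul _ _
    _ ≤ p * mgfIoi w s := by gcongr; exact setIntegral_le_mgfIoi hw hw0 s Ioc_subset_Ioi_self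
  have hfar : ∫ t in Ioi p, exp (s * t) * (t * w t) ≤ exp (s * p) * ∫ t in Ioi p, t * w t :=
    setIntegral_exp_mul_le hw' hw0' (Ioi_subset_Ioi hp) measurableSet_Ioi
      fun t (ht : p < t) ↦ mul_le_mul_of_nonpos_left ht.le hs
  rw [mgfIoi_eq_add hw' s hp]
  exact add_le_add hnear hfar

lemma mul_setIntegral_Ioi_le_mgfIoi_mul_self
    (hw : ∀ s, IntegrableOn (fun t ↦ exp (s * t) * w t) (Ioi 0))
    (hw0 : ∀ t ∈ Ioi 0, 0 ≤ w t) {q : ℝ} (hq : 0 ≤ q) (s : ℝ) :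
    q * ∫ t in Ioi q, exp (s * t) * w t ≤ mgfIoi (fun t ↦ t * w t) s := calc
  _ = ∫ t in Ioi q, q * (exp (s * t) * w t) := (integral_const_mul _ _).symm
  _ ≤ ∫ t in Ioi q, exp (s * t) * (t * w t) :=
      setIntegral_mono_on (((hw s).mono_set (Ioi_subset_Ioi hq)).const_mul q)
        ((integrableOn_exp_mul_mul_self hw s).mono_set (Ioi_subset_Ioi hq)) measurableSet_Ioi
        fun t (ht : q < t) ↦ by
          rw [mul_left_comm (exp (s * t))]
          exact mul_le_mul_of_nonneg_right ht.le
            (mul_nonneg (exp_pos _).le (hw0 t (hq.trans_lt ht)))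
  _ ≤ mgfIoi (fun t ↦ t * w t) s :=
      setIntegral_le_mgfIoi (integrableOn_exp_mul_mul_self hw)
        (fun t ht ↦ mul_nonneg (le_of_lt ht) (hw0 t ht)) s (Ioi_subset_Ioi hq)

theorem tendsto_mgfIoi_mul_self_div_atBot
    (hw : ∀ s, IntegrableOn (fun t ↦ exp (s * t) * w t) (Ioi 0))
    (hpos : ∀ t ∈ Ioi 0, 0 < w t) :
    Tendsto (fun s ↦ mgfIoi (fun t ↦ t * w t) s / mgfIoi w s) atBot (𝓝 0) := by
  have hw0 t (ht : t ∈ Ioi 0) : 0 ≤ w t := (hpos t ht).le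
  have hw' := integrableOn_exp_mul_mul_self hw
  have hpos' t (ht : t ∈ Ioi (0 : ℝ)) : 0 < t * w t := mul_pos ht (hpos t ht)
  refine tendsto_order.2 ⟨fun a ha ↦ Eventually.of_forall fun s ↦
    ha.trans (div_pos (mgfIoi_pos hw' hpos' s) (mgfIoi_pos hw hpos s)), fun ε hε ↦ ?_⟩
  set p := ε / 2
  have hp : 0 < p := by positivity
  set A := ∫ t in Ioi p, t * w t
  set B := ∫ t in Ioc 0 (p / 2), w t
  have hB : 0 < B := by
    simpa using setIntegral_exp_mul_pos hw hpos 0 Ioc_subset_Ioi_self measurableSet_Ioc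
      (by simp [hp])
  have hsmall : Tendsto (fun s ↦ exp (s * (p / 2)) * A) atBot (𝓝 (0 * A)) :=
    (tendsto_exp_atBot.comp (tendsto_id.atBot_mul_const (by positivity))).mul_const A
  filter_upwards [hsmall.eventually_lt_const (by rw [zero_mul]; positivity : 0 * A < p * B),
    eventually_le_atBot 0] with s hs hs0
  rw [div_lt_iff₀ (mgfIoi_pos hw hpos s)]
  have hlow : exp (s * (p / 2)) * B ≤ mgfIoi w s :=
    (exp_mul_le_setIntegral hw hw0 Ioc_subset_Ioi_self measurableSet_Ioc
      fun t ht ↦ mul_le_mul_of_nonpos_left ht.2 hs0).trans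
      (setIntegral_le_mgfIoi hw hw0 s Ioc_subset_Ioi_self)
  have hfar : exp (s * p) * A < p * mgfIoi w s := calc
    exp (s * p) * A = exp (s * (p / 2)) * (exp (s * (p / 2)) * A) := by
      rw [← mul_assoc, ← exp_add, ← mul_add, add_halves]
    _ < exp (s * (p / 2)) * (p * B) := mul_lt_mul_of_pos_left hs (exp_pos _)
    _ ≤ p * mgfIoi w s := by rw [mul_left_comm]; gcongr
  calc mgfIoi (fun t ↦ t * w t) s ≤ p * mgfIoi w s + exp (s * p) * A :=
        mgfIoi_mul_self_le_of_nonpos hw hw0 hp.le hs0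
    _ < p * mgfIoi w s + p * mgfIoi w s := by gcongr
    _ = ε * mgfIoi w s := by ring

theorem tendsto_mgfIoi_mul_self_div_atTop
    (hw : ∀ s, IntegrableOn (fun t ↦ exp (s * t) * w t) (Ioi 0))
    (hpos : ∀ t ∈ Ioi 0, 0 < w t) :
    Tendsto (fun s ↦ mgfIoi (fun t ↦ t * w t) s / mgfIoi w s) atTop atTop := by
  have hw0 t (ht : t ∈ Ioi 0) : 0 ≤ w t := (hpos t ht).le
  refine tendsto_atTop.2 fun r ↦ ?_
  set q := 2 * max r 1
  have hq : 0 < q := by positivity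
  set A := ∫ t in Ioc 0 q, w t
  set B := ∫ t in Ioi (2 * q), w t
  have hB : 0 < B := by
    simpa using setIntegral_exp_mul_pos hw hpos 0 (Ioi_subset_Ioi (by positivity))
      measurableSet_Ioi (by simp)
  have hlarge : Tendsto (fun s ↦ exp (s * q)) atTop atTop :=
    tendsto_exp_atTop.comp (tendsto_id.atTop_mul_const hq)
  filter_upwards [hlarge.eventually_ge_atTop (2 * A / B), eventually_ge_atTop 0] with s hs hs0
  rw [le_div_iff₀ (mgfIoi_pos hw hpos s)]
  have hnear : ∫ t in Ioc 0 q, exp (s * t) * w t ≤ exp (s * q) * A :=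
    setIntegral_exp_mul_le hw hw0 Ioc_subset_Ioi_self measurableSet_Ioc
      fun t ht ↦ mul_le_mul_of_nonneg_left ht.2 hs0
  have hlow : exp (s * q) * (exp (s * q) * B) ≤ mgfIoi w s := by
    rw [← mul_assoc, ← exp_add, ← mul_add, ← two_mul]
    exact (exp_mul_le_setIntegral hw hw0 (Ioi_subset_Ioi (by positivity)) measurableSet_Ioi
      fun t (ht : 2 * q < t) ↦ mul_le_mul_of_nonneg_left ht.le hs0).trans
      (setIntegral_le_mgfIoi hw hw0 s (Ioi_subset_Ioi (by positivity)))
  have hhalf : mgfIoi w s ≤ 2 * ∫ t in Ioi q, exp (s * t) * w t := by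
    have : 2 * A ≤ exp (s * q) * B := (div_le_iff₀ hB).1 hs
    have : 2 * (exp (s * q) * A) ≤ exp (s * q) * (exp (s * q) * B) := by
      rw [mul_left_comm]; gcongr
    linarith [mgfIoi_eq_add hw s hq.le]
  calc r * mgfIoi w s ≤ (q / 2) * mgfIoi w s := by
        gcongr
        · exact (mgfIoi_pos hw hpos s).le
        · simp [q]
    _ ≤ q * ∫ t in Ioi q, exp (s * t) * w t := by nlinarith
    _ ≤ _ := mul_setIntegral_Ioi_le_mgfIoi_mul_self hw hw0 hq.le s

end mgfIoi

section Fa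

variable {a : ℝ}

lemma integrableOn_exp_mul_exp_neg_sq_mul_rpow (ha : -1 < a) (s : ℝ) :
    IntegrableOn (fun t ↦ exp (s * t) * (exp (-t ^ 2) * t ^ a)) (Ioi 0) := by
  refine ((integrableOn_rpow_mul_exp_neg_mul_sq one_half_pos ha).const_mul
    (exp (s ^ 2 / 2))).mono' (by fun_prop : Measurable _).aestronglyMeasurable ?_
  filter_upwards [ae_restrict_mem measurableSet_Ioi] with t (ht : 0 < t)
  rw [norm_of_nonneg (by positivity)]
  calc exp (s * t) * (exp (-t ^ 2) * t ^ a) = exp (s * t + -t ^ 2) * t ^ a := by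
        rw [exp_add]; ring
    _ ≤ exp (s ^ 2 / 2 + -(1 / 2) * t ^ 2) * t ^ a := by
        refine mul_le_mul_of_nonneg_right (exp_le_exp.2 ?_) (by positivity)
        nlinarith [sq_nonneg (t - s)]
    _ = exp (s ^ 2 / 2) * (t ^ a * exp (-(1 / 2) * t ^ 2)) := by rw [exp_add]; ring

lemma Fa_eq_mgfIoi (a x : ℝ) : Fa a x = mgfIoi (fun t ↦ exp (-t ^ 2) * t ^ a) (-2 * x) := by
  refine integral_congr_ae (Eventually.of_forall fun t ↦ ?_)
  simp only
  rw [← mul_assoc, ← exp_add]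
  ring_nf

lemma Fa_add_one_eq_mgfIoi (a x : ℝ) :
    Fa (a + 1) x = mgfIoi (fun t ↦ t * (exp (-t ^ 2) * t ^ a)) (-2 * x) := by
  rw [Fa_eq_mgfIoi]
  refine setIntegral_congr_fun measurableSet_Ioi fun t (ht : 0 < t) ↦ ?_
  simp only [rpow_add_one ht.ne']
  ring

lemma exp_neg_sq_mul_rpow_pos (t : ℝ) (ht : t ∈ Ioi 0) : 0 < exp (-t ^ 2) * t ^ a :=
  mul_pos (exp_pos _) (rpow_pos_of_pos ht a)

lemma Fa_pos (ha : -1 < a) (x : ℝ) : 0 < Fa a x := by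
  rw [Fa_eq_mgfIoi]
  exact mgfIoi_pos (integrableOn_exp_mul_exp_neg_sq_mul_rpow ha) exp_neg_sq_mul_rpow_pos _

lemma hasDerivAt_Fa (ha : -1 < a) (x : ℝ) : HasDerivAt (Fa a) (-2 * Fa (a + 1) x) x := by
  have h := (hasDerivAt_mgfIoi (integrableOn_exp_mul_exp_neg_sq_mul_rpow ha) (-2 * x)).comp x
    ((hasDerivAt_id x).const_mul (-2))
  rw [funext (Fa_eq_mgfIoi a), Fa_add_one_eq_mgfIoi]
  exact h.congr_deriv (by ring)

lemma tendsto_Fa_add_one_div_atTop (ha : -1 < a) :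
    Tendsto (fun u ↦ Fa (a + 1) u / Fa a u) atTop (𝓝 0) := by
  refine ((tendsto_mgfIoi_mul_self_div_atBot (integrableOn_exp_mul_exp_neg_sq_mul_rpow ha)
    exp_neg_sq_mul_rpow_pos).comp
    (tendsto_id.const_mul_atTop_of_neg (by norm_num : (-2 : ℝ) < 0))).congr fun u ↦ ?_
  rw [Function.comp_apply, ← Fa_add_one_eq_mgfIoi, ← Fa_eq_mgfIoi, id]

lemma tendsto_Fa_add_one_div_atBot (ha : -1 < a) :
    Tendsto (fun u ↦ Fa (a + 1) u / Fa a u) atBot atTop := by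
  refine ((tendsto_mgfIoi_mul_self_div_atTop (integrableOn_exp_mul_exp_neg_sq_mul_rpow ha)
    exp_neg_sq_mul_rpow_pos).comp
    (tendsto_id.const_mul_atBot_of_neg (by norm_num : (-2 : ℝ) < 0))).congr fun u ↦ ?_
  rw [Function.comp_apply, ← Fa_add_one_eq_mgfIoi, ← Fa_eq_mgfIoi, id]

lemma iteratedDeriv_Fa_comp (ha : -1 < a) (β c d : ℝ) (n : ℕ) :
    iteratedDeriv n (fun x ↦ Fa a ((c - β * x) / d)) =
      fun x ↦ (2 * β / d) ^ n * Fa (a + n) ((c - β * x) / d) := by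
  induction n with
  | zero => simp
  | succ n ih =>
    have han : -1 < a + n := by linarith [(n.cast_nonneg : (0 : ℝ) ≤ n)]
    have hu x : HasDerivAt (fun x ↦ (c - β * x) / d) (-β / d) x := by
      simpa using (((hasDerivAt_id x).const_mul β).const_sub c).div_const d
    ext x
    rw [iteratedDeriv_succ, ih]
    refine (((hasDerivAt_Fa han _).comp x (hu x)).const_mul _).deriv.trans ?_
    push_cast
    rw [← add_assoc, pow_succ]
    ring

lemma iteratedDeriv_succ_div_iteratedDeriv_Fa_comp (ha : -1 < a) {β d : ℝ} (hβ : β ≠ 0)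
    (hd : d ≠ 0) (c : ℝ) (m : ℕ) (x : ℝ) :
    iteratedDeriv (m + 1) (fun x ↦ Fa a ((c - β * x) / d)) x /
        iteratedDeriv m (fun x ↦ Fa a ((c - β * x) / d)) x =
      2 * β / d * (Fa (a + m + 1) ((c - β * x) / d) / Fa (a + m) ((c - β * x) / d)) := by
  have ham : -1 < a + m := by linarith [(m.cast_nonneg : (0 : ℝ) ≤ m)]
  have := (Fa_pos ham ((c - β * x) / d)).ne'
  have : (2 * β / d) ^ m ≠ 0 := by simp [hβ, hd]
  simp only [iteratedDeriv_Fa_comp ha, Nat.cast_succ, ← add_assoc, pow_succ]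
  field_simp

end Fa

/-- For every `n ≥ 1`, the ratio `Φ⁽ⁿ⁾(x)/Φ⁽ⁿ⁻¹⁾(x)` of successive derivatives of `Φ`
tends to `0` as `x → -∞` and to `+∞` as `x → +∞`. -/
theorem Phi_derivative_ratio_asymptotics (β σh δ c : ℝ)
    (hβ : 0 < β) (hσ : 0 < σh) (hδ : 0 < δ) (n : ℕ) (hn : 1 ≤ n) :
    Tendsto (fun x : ℝ =>
        iteratedDeriv n (Phi β σh δ c) x / iteratedDeriv (n - 1) (Phi β σh δ c) x)
      atBot (nhds 0) ∧
    Tendsto (fun x : ℝ =>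
        iteratedDeriv n (Phi β σh δ c) x / iteratedDeriv (n - 1) (Phi β σh δ c) x)
      atTop atTop := by
  obtain ⟨m, rfl⟩ : ∃ m, n = m + 1 := ⟨n - 1, by omega⟩
  have ha : -1 < δ / β - 1 := by linarith [div_pos hδ hβ]
  have ham : -1 < δ / β - 1 + m := by linarith [(m.cast_nonneg : (0 : ℝ) ≤ m)]
  have hd : 0 < √β * σh := by positivity
  have hu_bot : Tendsto (fun x ↦ (c - β * x) / (√β * σh)) atBot atTop :=
    (tendsto_atTop_add_const_left _ c
      (by simpa using tendsto_id.const_mul_atBot_of_neg (neg_neg_of_pos hβ))).atTop_div_const hd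
  have hu_top : Tendsto (fun x ↦ (c - β * x) / (√β * σh)) atTop atBot :=
    (tendsto_atBot_add_const_left _ c
      (by simpa using tendsto_id.const_mul_atTop_of_neg (neg_neg_of_pos hβ))).atBot_div_const hd
  have hPhi : Phi β σh δ c = fun x ↦ Fa (δ / β - 1) ((c - β * x) / (√β * σh)) := rfl
  simp only [Nat.add_sub_cancel, hPhi,
    iteratedDeriv_succ_div_iteratedDeriv_Fa_comp ha hβ.ne' hd.ne']
  exact ⟨by simpa using ((tendsto_Fa_add_one_div_atTop ham).comp hu_bot).const_mul _,
    ((tendsto_Fa_add_one_div_atBot ham).comp hu_top).const_mul_atTop (by positivity)⟩
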